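/- If a FOLPb proof in the witness-variable language using CS(V) contains a witness variable a, and y is a basic variable not occurring anywhere in the proof, then the sequence obtained by replacing a with y throughout the proof is again a proof. -/

import Mathlib

/-- Justification terms of first-order justification logic (FOLPb / FOJT45). -/
inductive JTerm : Type
  | jvar : Nat → JTerm
  | jconst : Nat → JTerm
  | app : JTerm → JTerm → JTerm
  | plus : JTerm → JTerm → JTerm
  | bang : JTerm → JTerm
  | bb : JTerm → JTerm
  | gen : Nat → JTerm → JTerm
  | quest : JTerm → JTerm
  deriving DecidableEq

namespace JTerm

/-- Basic variables occurring as `gen` subscripts in a term. -/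
def gvars : JTerm → Finset Nat
  | jvar _ => ∅
  | jconst _ => ∅
  | app t s => t.gvars ∪ s.gvars
  | plus t s => t.gvars ∪ s.gvars
  | bang t => t.gvars
  | bb t => t.gvars
  | gen x t => insert x t.gvars
  | quest t => t.gvars

end JTerm

/-- Formulas of first-order justification logic.  Individual "variables" are either
basic variables (`Sum.inl n`, which may be quantified and appear as `gen` subscripts)
or extra constants from `V` (witness variables / domain members), which are never
quantified. -/
inductive Fml (V : Type) : Type
  | atom : Nat → List (Nat ⊕ V) → Fml V
  | bot : Fml V
  | imp : Fml V → Fml V → Fml V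
  | all : Nat → Fml V → Fml V
  | box : JTerm → Finset (Nat ⊕ V) → Fml V → Fml V

namespace Fml

variable {V : Type} [DecidableEq V]

def neg (φ : Fml V) : Fml V := φ.imp .bot
def orr (φ ψ : Fml V) : Fml V := φ.neg.imp ψ
def andd (φ ψ : Fml V) : Fml V := (φ.imp ψ.neg).neg
def ex (x : Nat) (φ : Fml V) : Fml V := (Fml.all x φ.neg).neg

/-- Free individual variables.  Following the paper, `fv (t :_X φ) = X`. -/
def fv : Fml V → Finset (Nat ⊕ V)
  | atom _ l => l.toFinset
  | bot => ∅
  | imp φ ψ => φ.fv ∪ ψ.fv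
  | all x φ => φ.fv \ {Sum.inl x}
  | box _ X _ => X

/-- Substitution of `e` for the free occurrences of the individual variable `x`. -/
def subst (x e : Nat ⊕ V) : Fml V → Fml V
  | atom P l => atom P (l.map fun v => if v = x then e else v)
  | bot => bot
  | imp φ ψ => imp (subst x e φ) (subst x e ψ)
  | all y φ => if x = Sum.inl y then all y φ else all y (subst x e φ)
  | box t X φ =>
      if x ∈ X then box t (X.image fun v => if v = x then e else v) (subst x e φ)
      else box t X φ

/-- `e` is free for `x` in the given formula. -/
def freeFor (e x : Nat ⊕ V) : Fml V → Prop
  | atom _ _ => True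
  | bot => True
  | imp φ ψ => freeFor e x φ ∧ freeFor e x ψ
  | all y φ => x ∉ (Fml.all y φ).fv ∨ (e ≠ Sum.inl y ∧ freeFor e x φ)
  | box _ X φ => freeFor e x φ ∧ (e ∈ φ.fv → e ∈ X)

/-- All individual variables occurring in a formula (free, bound, in subscripts,
or as `gen` subscripts of justification terms). -/
def allVars : Fml V → Finset (Nat ⊕ V)
  | atom _ l => l.toFinset
  | bot => ∅
  | imp φ ψ => φ.allVars ∪ ψ.allVars
  | all x φ => insert (Sum.inl x) φ.allVars
  | box t X φ => X ∪ t.gvars.image Sum.inl ∪ φ.allVars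

/-- The set of witness variables / domain constants (`Sum.inr`-variables) occurring
in a formula. -/
def wvars (φ : Fml V) : Finset (Nat ⊕ V) := φ.allVars.filter fun v => v.isRight

/-- Free basic variables. -/
def fbv (φ : Fml V) : Finset Nat :=
  φ.fv.biUnion fun v => match v with | Sum.inl n => {n} | Sum.inr _ => ∅

/-- Universal closure (over the free basic variables). -/
noncomputable def close (φ : Fml V) : Fml V := φ.fbv.toList.foldr Fml.all φ

/-- Renaming of the free individual variables of a formula. -/
def renameFree (ρ : (Nat ⊕ V) → (Nat ⊕ V)) : Fml V → Fml V
  | atom P l => atom P (l.map ρ)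
  | bot => bot
  | imp φ ψ => imp (renameFree ρ φ) (renameFree ρ ψ)
  | all y φ => all y (renameFree (Function.update ρ (Sum.inl y) (Sum.inl y)) φ)
  | box t X φ => box t (X.image ρ) (renameFree (fun v => if v ∈ X then ρ v else v) φ)

/-- Replacement of *every* occurrence of the individual variable `a` by `e`
(used for witness variables, which are never bound). -/
def replaceAll (a e : Nat ⊕ V) : Fml V → Fml V
  | atom P l => atom P (l.map fun v => if v = a then e else v)
  | bot => bot
  | imp φ ψ => imp (replaceAll a e φ) (replaceAll a e ψ)
  | all x φ => all x (replaceAll a e φ)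
  | box t X φ => box t (X.image fun v => if v = a then e else v) (replaceAll a e φ)

/-- Change the type of extra constants. -/
def vmap {V' : Type} [DecidableEq V'] (f : V → V') : Fml V → Fml V'
  | atom P l => atom P (l.map (Sum.map id f))
  | bot => bot
  | imp φ ψ => imp (vmap f φ) (vmap f ψ)
  | all x φ => all x (vmap f φ)
  | box t X φ => box t (X.image (Sum.map id f)) (vmap f φ)

def size : Fml V → Nat
  | atom _ _ => 1
  | bot => 1
  | imp φ ψ => φ.size + ψ.size + 1
  | all _ φ => φ.size + 1
  | box _ _ φ => φ.size + 1

/-- Simultaneous substitution of all free basic variables. -/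
def instAll (σ : Nat → Nat ⊕ V) : Fml V → Fml V
  | atom P l => atom P (l.map fun v => match v with | Sum.inl n => σ n | w => w)
  | bot => bot
  | imp φ ψ => imp (instAll σ φ) (instAll σ ψ)
  | all x φ => all x (instAll (Function.update σ x (Sum.inl x)) φ)
  | box t X φ =>
      box t (X.image fun v => match v with | Sum.inl n => σ n | w => w)
        (instAll (fun n => if Sum.inl n ∈ X then σ n else Sum.inl n) φ)

theorem size_subst (x e : Nat ⊕ V) : ∀ φ : Fml V, (φ.subst x e).size = φ.size := by
  intro φ
  induction φ with
  | atom P l => simp [subst, size]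
  | bot => simp [subst, size]
  | imp φ ψ ihφ ihψ => simp [subst, size, ihφ, ihψ]
  | all y φ ih => by_cases h : x = Sum.inl y <;> simp [subst, size, h, ih]
  | box t X φ ih => by_cases h : x ∈ X <;> simp [subst, size, h, ih]

theorem size_instAll : ∀ (φ : Fml V) (σ : Nat → Nat ⊕ V), (φ.instAll σ).size = φ.size := by
  intro φ
  induction φ with
  | atom P l => intro σ; simp [instAll, size]
  | bot => intro σ; simp [instAll, size]
  | imp φ ψ ihφ ihψ => intro σ; simp [instAll, size, ihφ, ihψ]
  | all y φ ih => intro σ; simp [instAll, size, ih]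
  | box t X φ ih => intro σ; simp [instAll, size, ih]

end Fml

/-- The two logics considered in the paper. -/
inductive Logic : Type
  | folpb
  | fojt45

/-- Axioms of the systems: **A1** (a standard Hilbert axiomatization of classical
first-order logic), **A2**, **A3**, **B1**–**B5**, together with the Barcan axiom
**Bb** (for FOLPb only) and negative introspection **B6** (for FOJT45 only). -/
inductive IsAxiom {V : Type} [DecidableEq V] : Logic → Fml V → Prop
  | a1k (L) (φ ψ : Fml V) : IsAxiom L (φ.imp (ψ.imp φ))
  | a1s (L) (φ ψ χ : Fml V) :
      IsAxiom L ((φ.imp (ψ.imp χ)).imp ((φ.imp ψ).imp (φ.imp χ)))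
  | a1dne (L) (φ : Fml V) : IsAxiom L (φ.neg.neg.imp φ)
  | a1inst (L) (x : Nat) (e : Nat ⊕ V) (φ : Fml V) (h : φ.freeFor e (Sum.inl x)) :
      IsAxiom L ((Fml.all x φ).imp (φ.subst (Sum.inl x) e))
  | a1allImp (L) (x : Nat) (φ ψ : Fml V) :
      IsAxiom L ((Fml.all x (φ.imp ψ)).imp ((Fml.all x φ).imp (Fml.all x ψ)))
  | a1vac (L) (x : Nat) (φ : Fml V) (h : Sum.inl x ∉ φ.fv) :
      IsAxiom L (φ.imp (Fml.all x φ))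
  | a2 (L) (t : JTerm) (X : Finset (Nat ⊕ V)) (y : Nat ⊕ V) (φ : Fml V)
      (h : y ∉ φ.fv) :
      IsAxiom L ((Fml.box t (insert y X) φ).imp (Fml.box t X φ))
  | a3 (L) (t : JTerm) (X : Finset (Nat ⊕ V)) (y : Nat ⊕ V) (φ : Fml V) :
      IsAxiom L ((Fml.box t X φ).imp (Fml.box t (insert y X) φ))
  | b1 (L) (t : JTerm) (X : Finset (Nat ⊕ V)) (φ : Fml V) :
      IsAxiom L ((Fml.box t X φ).imp φ)
  | b2 (L) (t s : JTerm) (X : Finset (Nat ⊕ V)) (φ ψ : Fml V) :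
      IsAxiom L ((Fml.box t X (φ.imp ψ)).imp
        ((Fml.box s X φ).imp (Fml.box (t.app s) X ψ)))
  | b3l (L) (t s : JTerm) (X : Finset (Nat ⊕ V)) (φ : Fml V) :
      IsAxiom L ((Fml.box t X φ).imp (Fml.box (t.plus s) X φ))
  | b3r (L) (t s : JTerm) (X : Finset (Nat ⊕ V)) (φ : Fml V) :
      IsAxiom L ((Fml.box s X φ).imp (Fml.box (t.plus s) X φ))
  | b4 (L) (t : JTerm) (X : Finset (Nat ⊕ V)) (φ : Fml V) :
      IsAxiom L ((Fml.box t X φ).imp (Fml.box t.bang X (Fml.box t X φ)))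
  | b5 (L) (t : JTerm) (X : Finset (Nat ⊕ V)) (x : Nat) (φ : Fml V)
      (h : Sum.inl x ∉ X) :
      IsAxiom L ((Fml.box t X φ).imp (Fml.box (t.gen x) X (Fml.all x φ)))
  | bb (t : JTerm) (X : Finset (Nat ⊕ V)) (y : Nat) (φ : Fml V)
      (h : Sum.inl y ∉ X) :
      IsAxiom Logic.folpb
        ((Fml.all y (Fml.box t (insert (Sum.inl y) X) φ)).imp
          (Fml.box t.bb X (Fml.all y φ)))
  | b6 (t : JTerm) (X : Finset (Nat ⊕ V)) (φ : Fml V) :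
      IsAxiom Logic.fojt45
        ((Fml.box t X φ).neg.imp (Fml.box t.quest X (Fml.box t X φ).neg))

/-- Derivability from a set `Γ` of assumptions, with extra axioms from the constant
specification `CS`; generalization is only applied to variables not free in `Γ`. -/
inductive Deriv {V : Type} [DecidableEq V] (L : Logic) (CS : Set (Fml V))
    (Γ : Set (Fml V)) : Fml V → Prop
  | ax {φ : Fml V} : IsAxiom L φ → Deriv L CS Γ φ
  | cs {φ : Fml V} : φ ∈ CS → Deriv L CS Γ φ
  | hyp {φ : Fml V} : φ ∈ Γ → Deriv L CS Γ φ
  | mp {φ ψ : Fml V} : Deriv L CS Γ (φ.imp ψ) → Deriv L CS Γ φ → Deriv L CS Γ ψ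
  | genR {φ : Fml V} {x : Nat} : Deriv L CS Γ φ →
      (∀ ψ ∈ Γ, Sum.inl x ∉ ψ.fv) → Deriv L CS Γ (Fml.all x φ)

/-- `CS` is a constant specification: each member has the form `c : ψ` with `ψ` an axiom. -/
def IsCS {V : Type} [DecidableEq V] (L : Logic) (CS : Set (Fml V)) : Prop :=
  ∀ χ ∈ CS, ∃ (c : Nat) (φ : Fml V),
    χ = Fml.box (JTerm.jconst c) ∅ φ ∧ IsAxiom L φ

/-- `CS` is axiomatically appropriate. -/
def AxAppropriate {V : Type} [DecidableEq V] (L : Logic) (CS : Set (Fml V)) : Prop :=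
  ∀ φ : Fml V, IsAxiom L φ → ∃ c : Nat, Fml.box (JTerm.jconst c) ∅ φ ∈ CS

def Consistent {V : Type} [DecidableEq V] (L : Logic) (CS Γ : Set (Fml V)) : Prop :=
  ¬ Deriv L CS Γ Fml.bot

def MaxConsistent {V : Type} [DecidableEq V] (L : Logic) (CS Γ : Set (Fml V)) : Prop :=
  Consistent L CS Γ ∧ ∀ Δ : Set (Fml V), Γ ⊆ Δ → Consistent L CS Δ → Δ = Γ

/-- Formulas of the basic language (no witness variables). -/
abbrev FmlB := Fml Empty

/-- Henkin formulas: formulas possibly containing witness variables (`Sum.inr`). -/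
abbrev FmlW := Fml Nat

/-- A basic-language formula regarded as a Henkin formula. -/
def liftB : FmlB → FmlW := Fml.vmap fun e => e.elim

/-- A Henkin formula containing no witness variables. -/
def NoWitness (φ : FmlW) : Prop := ∀ v ∈ φ.allVars, v.isLeft = true

/-- Two formulas are variable variants: one is obtained from the other by a
bijective renaming of free individual variables. -/
def VarVariant {V : Type} [DecidableEq V] (φ ψ : Fml V) : Prop :=
  ∃ ρ : (Nat ⊕ V) → (Nat ⊕ V), Function.Bijective ρ ∧ ψ = Fml.renameFree ρ φ

/-- A constant specification is variant closed. -/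
def VariantClosed {V : Type} [DecidableEq V] (CS : Set (Fml V)) : Prop :=
  ∀ (φ ψ : Fml V) (c : Nat), VarVariant φ ψ →
    (Fml.box (JTerm.jconst c) ∅ φ ∈ CS ↔ Fml.box (JTerm.jconst c) ∅ ψ ∈ CS)

/-- The extension `CS(V)` of a basic constant specification to the language with
witness variables: justified axioms with some free basic variables replaced by
distinct witness variables. -/
def CSV (CS : Set FmlB) : Set FmlW :=
  {χ | ∃ (c : Nat) (φ : FmlB) (ρ : (Nat ⊕ Nat) → (Nat ⊕ Nat)),
    Fml.box (JTerm.jconst c) ∅ φ ∈ CS ∧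
    Function.Injective ρ ∧
    (∀ m : Nat, ρ (Sum.inr m) = Sum.inr m) ∧
    (∀ n : Nat, ρ (Sum.inl n) = Sum.inl n ∨ ∃ m : Nat, ρ (Sum.inl n) = Sum.inr m) ∧
    χ = Fml.box (JTerm.jconst c) ∅ (Fml.renameFree ρ (liftB φ))}

/-- `Γ^#`. -/
def sharp (Γ : Set FmlW) : Set FmlW :=
  {χ | ∃ (t : JTerm) (X : Finset (Nat ⊕ Nat)) (φ : FmlW),
    Fml.box t X φ ∈ Γ ∧ (Fml.box t X φ : FmlW).fbv = ∅ ∧ X = φ.wvars ∧ χ = φ.close}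

/-! ### Templates -/

inductive Tmpl : Type
  | pvar : Nat → Tmpl
  | neg : Tmpl → Tmpl
  | orr : Tmpl → Tmpl → Tmpl
  | andd : Tmpl → Tmpl → Tmpl
  | box : Tmpl → Tmpl

namespace Tmpl

def letters : Tmpl → Multiset Nat
  | pvar i => {i}
  | neg G => G.letters
  | orr G H => G.letters + H.letters
  | andd G H => G.letters + H.letters
  | box G => G.letters

/-- No propositional letter occurs more than once. -/
def IsTemplate (F : Tmpl) : Prop := F.letters.Nodup

def Positive : Tmpl → Prop
  | pvar _ => True
  | neg _ => False
  | orr G H => G.Positive ∧ H.Positive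
  | andd G H => G.Positive ∧ H.Positive
  | box G => G.Positive

def Disjunctive : Tmpl → Prop
  | pvar _ => True
  | neg _ => False
  | orr G H => G.Disjunctive ∧ H.Disjunctive
  | andd _ _ => False
  | box G => G.Disjunctive

end Tmpl

/-- The instantiation set `⟦F(φ⃗)⟧`, where the valuation `v` gives the Henkin formula
substituted for each propositional letter. -/
inductive Inst (v : Nat → FmlW) : Tmpl → FmlW → Prop
  | pvar (i : Nat) : Inst v (Tmpl.pvar i) (v i)
  | neg {G : Tmpl} {ψ : FmlW} : Inst v G ψ → Inst v (Tmpl.neg G) ψ.neg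
  | orr {G H : Tmpl} {ψ θ : FmlW} :
      Inst v G ψ → Inst v H θ → Inst v (Tmpl.orr G H) (ψ.orr θ)
  | andd {G H : Tmpl} {ψ θ : FmlW} :
      Inst v G ψ → Inst v H θ → Inst v (Tmpl.andd G H) (ψ.andd θ)
  | box {G : Tmpl} {ψ : FmlW} (t : JTerm) :
      Inst v G ψ → Inst v (Tmpl.box G) (Fml.box t ψ.wvars ψ)

/-- The set of negations of members of `⟦F(φ⃗)⟧`. -/
def NegInst (v : Nat → FmlW) (F : Tmpl) : Set FmlW :=
  {χ | ∃ ψ : FmlW, Inst v F ψ ∧ χ = ψ.neg}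

/-- `Δ` admits instantiation (relative to the basic constant specification `CS`). -/
def AdmitsInst (CS : Set FmlB) (Δ : Set FmlW) : Prop :=
  ∀ F : Tmpl, F.IsTemplate → F.Disjunctive →
    ∀ (v : Nat → FmlW) (q x : Nat) (φ : FmlW),
      Consistent Logic.folpb (CSV CS)
        (Δ ∪ NegInst (Function.update v q (Fml.all x φ)) F) →
      ∃ a : Nat,
        Consistent Logic.folpb (CSV CS)
          (Δ ∪ NegInst (Function.update v q (φ.subst (Sum.inl x) (Sum.inr a))) F)

/-! ### Fitting models -/

/-- A Fitting model for FOLPb with constant domain `D`. -/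
structure FModel (D : Type) [DecidableEq D] where
  W : Type
  nonempty : Nonempty W
  R : W → W → Prop
  refl : ∀ w, R w w
  trans : ∀ {u v w}, R u v → R v w → R u w
  I : Nat → W → List D → Prop
  E : JTerm → Fml D → Set W
  condApp : ∀ (t s : JTerm) (φ ψ : Fml D), E t (φ.imp ψ) ∩ E s φ ⊆ E (t.app s) ψ
  condPlus : ∀ (t s : JTerm) (φ : Fml D), E t φ ∪ E s φ ⊆ E (t.plus s) φ
  condBang : ∀ (t : JTerm) (φ : Fml D) (X : Finset (Nat ⊕ D)),
    (∀ x ∈ X, x.isRight = true) → φ.wvars ⊆ X →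
    E t φ ⊆ E t.bang (Fml.box t X φ)
  condClosure : ∀ (t : JTerm) (φ : Fml D) {w w'},
    w ∈ E t φ → R w w' → w' ∈ E t φ
  condInst : ∀ (t : JTerm) (φ : Fml D) (x : Nat) (a : D) {w},
    w ∈ E t φ → w ∈ E t (φ.subst (Sum.inl x) (Sum.inr a))
  condGen : ∀ (t : JTerm) (φ : Fml D) (x : Nat), E t φ ⊆ E (t.gen x) (Fml.all x φ)
  condB : ∀ (t : JTerm) (φ : Fml D) (y : Nat) {w},
    (∀ a : D, w ∈ E t (φ.subst (Sum.inl y) (Sum.inr a))) →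
    w ∈ E t.bb (Fml.all y φ)

/-- Truth of a (closed) `D`-formula at a world. -/
def Truth {D : Type} [DecidableEq D] (M : FModel D) : M.W → Fml D → Prop
  | w, .atom P l => ∃ ds : List D, l = ds.map Sum.inr ∧ M.I P w ds
  | _, .bot => False
  | w, .imp φ ψ => Truth M w φ → Truth M w ψ
  | w, .all x φ => ∀ a : D, Truth M w (φ.subst (Sum.inl x) (Sum.inr a))
  | w, .box t _ φ => w ∈ M.E t φ ∧
      ∀ w', M.R w w' → ∀ σ : Nat → Nat ⊕ D, (∀ n, ∃ a : D, σ n = Sum.inr a) →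
        Truth M w' (φ.instAll σ)
  termination_by _ φ => φ.size
  decreasing_by
    all_goals simp [Fml.size, Fml.size_subst, Fml.size_instAll]
    all_goals omega

/-- A basic-language formula as a `D`-formula. -/
def toD {D : Type} [DecidableEq D] : FmlB → Fml D := Fml.vmap fun e => e.elim

/-- Validity in a model: the universal closure is true at every world. -/
def Valid {D : Type} [DecidableEq D] (M : FModel D) (φ : FmlB) : Prop :=
  ∀ w : M.W, Truth M w (toD φ.close)

/-- The model meets the constant specification `CS`. -/
def Meets {D : Type} [DecidableEq D] (M : FModel D) (CS : Set FmlB) : Prop :=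
  ∀ (c : Nat) (φ : FmlB), Fml.box (JTerm.jconst c) ∅ φ ∈ CS →
    ∀ w : M.W, w ∈ M.E (JTerm.jconst c) (toD φ)

/-- A proof in FOLPb over the witness-variable language with extra axioms `CS`:
every entry is an axiom, a member of `CS`, or follows from earlier entries by
modus ponens or generalization. -/
def IsProofSeq (L : Logic) (CS : Set FmlW) (seq : List FmlW) : Prop :=
  ∀ i, (hi : i < seq.length) →
    IsAxiom L (seq.get ⟨i, hi⟩) ∨ seq.get ⟨i, hi⟩ ∈ CS ∨
    (∃ j k, ∃ hj : j < i, ∃ hk : k < i,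
      seq.get ⟨k, Nat.lt_trans hk hi⟩ =
        (seq.get ⟨j, Nat.lt_trans hj hi⟩).imp (seq.get ⟨i, hi⟩)) ∨
    (∃ j, ∃ hj : j < i, ∃ x : Nat,
      seq.get ⟨i, hi⟩ = Fml.all x (seq.get ⟨j, Nat.lt_trans hj hi⟩))


/-! Since `y` is fresh, replacing `a` by `y` is injective on the variables of each formula of
the proof and commutes with substitution of terms for other basic variables; hence axioms go
to axioms (instances of `∀x φ → φ(x := e)` stay instances), while modus ponens and
generalization steps are preserved because the replacement commutes with `→` and `∀`.
Members of `CSV CS` contain no witness variable at all (an injective renaming that fixes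
every witness variable cannot send a basic variable to one), so they are left unchanged. -/

theorem Function.Injective.eq_id_of_fixes_inr {α β : Type*} {ρ : α ⊕ β → α ⊕ β}
    (hinj : Function.Injective ρ) (hinr : ∀ b, ρ (Sum.inr b) = Sum.inr b)
    (hinl : ∀ a, ρ (Sum.inl a) = Sum.inl a ∨ ∃ b, ρ (Sum.inl a) = Sum.inr b) : ρ = id := by
  funext v
  cases v with
  | inl a =>
    obtain h | ⟨b, h⟩ := hinl a
    · exact h
    · exact absurd (hinj (h.trans (hinr b).symm)) Sum.inl_ne_inr
  | inr b => exact hinr b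

theorem exists_inl_notMem_finset {V : Type} (S : Finset (Nat ⊕ V)) :
    ∃ z : Nat, Sum.inl z ∉ S := by
  obtain ⟨z, hz⟩ := Infinite.exists_notMem_finset (S.preimage Sum.inl Sum.inl_injective.injOn)
  exact ⟨z, by simpa using hz⟩

namespace Fml

variable {V : Type} [DecidableEq V]

theorem fv_subset_allVars (φ : Fml V) : φ.fv ⊆ φ.allVars := by
  induction φ with
  | atom => exact subset_rfl
  | bot => exact subset_rfl
  | imp φ ψ ihφ ihψ => exact Finset.union_subset_union ihφ ihψ
  | all x φ ih => exact Finset.sdiff_subset.trans (ih.trans (Finset.subset_insert _ _))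
  | box t X φ => exact (Finset.subset_union_left).trans Finset.subset_union_left

theorem subst_of_notMem_fv {w : Nat ⊕ V} (e : Nat ⊕ V) {φ : Fml V} (h : w ∉ φ.fv) :
    φ.subst w e = φ := by
  induction φ with
  | atom P l =>
    have : ∀ v ∈ l, (if v = w then e else v) = v := fun v hv =>
      if_neg fun hvw => h (by simp [fv, ← hvw, hv])
    simp only [subst, List.map_congr_left this, List.map_id']
  | bot => rfl
  | imp φ ψ ihφ ihψ =>
    simp only [fv, Finset.mem_union, not_or] at h
    simp only [subst, ihφ h.1, ihψ h.2]
  | all z φ ih =>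
    by_cases hz : w = Sum.inl z
    · simp only [subst, if_pos hz]
    · simp only [fv, Finset.mem_sdiff, Finset.mem_singleton, hz, not_false_eq_true,
        and_true] at h
      simp only [subst, if_neg hz, ih h]
  | box t X φ => exact if_neg h

theorem mem_allVars_subst {w : Nat ⊕ V} (e : Nat ⊕ V) {φ : Fml V} (h : w ∈ φ.fv) :
    e ∈ (φ.subst w e).allVars := by
  induction φ with
  | atom P l =>
    simp only [subst, allVars, List.mem_toFinset, List.mem_map]
    exact ⟨w, by simpa [fv] using h, if_pos rfl⟩
  | bot => simp [fv] at h
  | imp φ ψ ihφ ihψ =>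
    simp only [fv, Finset.mem_union] at h
    simp only [subst, allVars, Finset.mem_union]
    exact h.imp ihφ ihψ
  | all z φ ih =>
    simp only [fv, Finset.mem_sdiff, Finset.mem_singleton] at h
    simp only [subst, if_neg h.2, allVars, Finset.mem_insert]
    exact Or.inr (ih h.1)
  | box t X φ =>
    have hX : w ∈ X := h
    simp only [subst, if_pos hX, allVars, Finset.mem_union, Finset.mem_image]
    exact Or.inl (Or.inl ⟨w, hX, if_pos rfl⟩)

theorem freeFor_of_notMem_allVars {e : Nat ⊕ V} (w : Nat ⊕ V) {φ : Fml V}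
    (h : e ∉ φ.allVars) : φ.freeFor e w := by
  induction φ with
  | atom => trivial
  | bot => trivial
  | imp φ ψ ihφ ihψ =>
    simp only [allVars, Finset.mem_union, not_or] at h
    exact ⟨ihφ h.1, ihψ h.2⟩
  | all z φ ih =>
    simp only [allVars, Finset.mem_insert, not_or] at h
    exact Or.inr ⟨h.1, ih h.2⟩
  | box t X φ ih =>
    simp only [allVars, Finset.mem_union, not_or] at h
    exact ⟨ih h.2, fun he => absurd (fv_subset_allVars φ he) h.2⟩

@[simp]
theorem renameFree_id (φ : Fml V) : φ.renameFree id = φ := by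
  induction φ with
  | atom => simp [renameFree]
  | bot => rfl
  | imp φ ψ ihφ ihψ => simp [renameFree, ihφ, ihψ]
  | all x φ ih =>
    have : Function.update id (Sum.inl x) (Sum.inl x) = (id : Nat ⊕ V → Nat ⊕ V) :=
      Function.update_eq_self _ _
    simp only [renameFree, this, ih]
  | box t X φ ih =>
    simp only [renameFree, Finset.image_id, id, ite_self]
    exact congrArg _ ih

theorem replaceAll_of_notMem_allVars {a : Nat ⊕ V} (e : Nat ⊕ V) {φ : Fml V}
    (h : a ∉ φ.allVars) : φ.replaceAll a e = φ := by
  induction φ with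
  | atom P l =>
    have : ∀ v ∈ l, (if v = a then e else v) = v := fun v hv =>
      if_neg fun hva => h (by simp [allVars, ← hva, hv])
    simp only [replaceAll, List.map_congr_left this, List.map_id']
  | bot => rfl
  | imp φ ψ ihφ ihψ =>
    simp only [allVars, Finset.mem_union, not_or] at h
    simp only [replaceAll, ihφ h.1, ihψ h.2]
  | all x φ ih =>
    simp only [allVars, Finset.mem_insert, not_or] at h
    simp only [replaceAll, ih h.2]
  | box t X φ ih =>
    simp only [allVars, Finset.mem_union, not_or] at h
    have : ∀ v ∈ X, (if v = a then e else v) = v := fun v hv =>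
      if_neg fun (hva : v = a) => h.1.1 (hva ▸ hv)
    simp only [replaceAll, Finset.image_congr this, Finset.image_id', ih h.2]

def replaceWitness (a : V) (y : Nat) (v : Nat ⊕ V) : Nat ⊕ V :=
  if v = Sum.inr a then Sum.inl y else v

section replaceWitness

variable {a : V} {y : Nat}

@[simp]
theorem replaceWitness_inl (n : Nat) : replaceWitness a y (Sum.inl n) = Sum.inl n := rfl

theorem replaceWitness_eq_inl_iff {x : Nat} (hx : x ≠ y) {v : Nat ⊕ V} :
    replaceWitness a y v = Sum.inl x ↔ v = Sum.inl x := by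
  unfold replaceWitness
  split_ifs with hv <;> simp [hv, Ne.symm hx]

theorem replaceWitness_injOn : Set.InjOn (replaceWitness a y) {v | v ≠ Sum.inl y} := by
  intro v hv w hw
  unfold replaceWitness
  split_ifs <;> grind

theorem inl_mem_image_replaceWitness_iff {x : Nat} (hx : x ≠ y) (X : Finset (Nat ⊕ V)) :
    Sum.inl x ∈ X.image (replaceWitness a y) ↔ Sum.inl x ∈ X := by
  simp [replaceWitness_eq_inl_iff hx]

theorem image_replaceWitness_insert_inl (n : Nat) (X : Finset (Nat ⊕ V)) :
    (insert (Sum.inl n) X).image (replaceWitness a y)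
      = insert (Sum.inl n) (X.image (replaceWitness a y)) := by
  rw [Finset.image_insert, replaceWitness_inl]

theorem replaceWitness_ite_inl {x : Nat} (hx : x ≠ y) (e v : Nat ⊕ V) :
    replaceWitness a y (if v = Sum.inl x then e else v)
      = if replaceWitness a y v = Sum.inl x then replaceWitness a y e
        else replaceWitness a y v := by
  by_cases hv : v = Sum.inl x <;> simp [hv, replaceWitness_eq_inl_iff hx]

@[simp]
theorem replaceAll_atom (P : Nat) (l : List (Nat ⊕ V)) :
    (atom P l).replaceAll (Sum.inr a) (Sum.inl y) = atom P (l.map (replaceWitness a y)) :=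
  rfl

@[simp]
theorem replaceAll_box (t : JTerm) (X : Finset (Nat ⊕ V)) (φ : Fml V) :
    (box t X φ).replaceAll (Sum.inr a) (Sum.inl y)
      = box t (X.image (replaceWitness a y)) (φ.replaceAll (Sum.inr a) (Sum.inl y)) :=
  rfl

theorem fv_replaceAll {φ : Fml V} (hy : Sum.inl y ∉ φ.allVars) :
    (φ.replaceAll (Sum.inr a) (Sum.inl y)).fv = φ.fv.image (replaceWitness a y) := by
  induction φ with
  | atom P l => ext; simp [fv]
  | bot => rfl
  | imp φ ψ ihφ ihψ =>
    simp only [allVars, Finset.mem_union, not_or] at hy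
    simp only [replaceAll, fv, ihφ hy.1, ihψ hy.2, Finset.image_union]
  | all z φ ih =>
    simp only [allVars, Finset.mem_insert, not_or] at hy
    have hzy : z ≠ y := fun h => hy.1 (by rw [h])
    ext w
    simp only [replaceAll, fv, ih hy.2, Finset.mem_sdiff, Finset.mem_image,
      Finset.mem_singleton]
    constructor
    · rintro ⟨⟨v, hv, rfl⟩, hvz⟩
      exact ⟨v, ⟨hv, fun h => hvz (by rw [h, replaceWitness_inl])⟩, rfl⟩
    · rintro ⟨v, ⟨hv, hvz⟩, rfl⟩
      exact ⟨⟨v, hv, rfl⟩, fun h => hvz ((replaceWitness_eq_inl_iff hzy).1 h)⟩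
  | box t X φ => rfl

theorem replaceWitness_mem_fv_replaceAll_iff {φ : Fml V} (hy : Sum.inl y ∉ φ.allVars)
    {w : Nat ⊕ V} (hw : w ≠ Sum.inl y) :
    replaceWitness a y w ∈ (φ.replaceAll (Sum.inr a) (Sum.inl y)).fv ↔ w ∈ φ.fv := by
  rw [fv_replaceAll hy]
  refine ⟨fun h => ?_, Finset.mem_image_of_mem _⟩
  obtain ⟨v, hv, hvw⟩ := Finset.mem_image.1 h
  have hvy : v ≠ Sum.inl y := fun h => hy (h ▸ fv_subset_allVars φ hv)
  rwa [← replaceWitness_injOn hvy hw hvw]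

theorem inl_mem_fv_replaceAll_iff {φ : Fml V} (hy : Sum.inl y ∉ φ.allVars) {x : Nat}
    (hx : x ≠ y) :
    Sum.inl x ∈ (φ.replaceAll (Sum.inr a) (Sum.inl y)).fv ↔ Sum.inl x ∈ φ.fv := by
  simpa using replaceWitness_mem_fv_replaceAll_iff (a := a) hy (w := Sum.inl x)
    (by simpa using hx)

theorem replaceAll_subst {x : Nat} (hx : x ≠ y) (e : Nat ⊕ V) (φ : Fml V) :
    (φ.subst (Sum.inl x) e).replaceAll (Sum.inr a) (Sum.inl y)
      = (φ.replaceAll (Sum.inr a) (Sum.inl y)).subst (Sum.inl x) (replaceWitness a y e) := by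
  induction φ with
  | atom P l =>
    simp only [subst, replaceAll_atom, List.map_map]
    congr 1
    exact List.map_congr_left fun v _ => replaceWitness_ite_inl hx e v
  | bot => rfl
  | imp φ ψ ihφ ihψ => simp only [subst, replaceAll, ihφ, ihψ]
  | all z φ ih =>
    by_cases hz : (Sum.inl x : Nat ⊕ V) = Sum.inl z <;> simp [subst, replaceAll, hz, ih]
  | box t X φ ih =>
    by_cases hX : Sum.inl x ∈ X
    · have hX' := (inl_mem_image_replaceWitness_iff (a := a) hx X).2 hX
      simp only [subst, if_pos hX, if_pos hX', replaceAll_box, ih, Finset.image_image]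
      congr 2
      exact funext (replaceWitness_ite_inl hx e)
    · have hX' := (inl_mem_image_replaceWitness_iff (a := a) hx X).not.2 hX
      simp only [subst, if_neg hX, if_neg hX', replaceAll_box]

theorem freeFor_replaceAll {x : Nat} (hx : x ≠ y) {e : Nat ⊕ V} (he : e ≠ Sum.inl y)
    {φ : Fml V} (hy : Sum.inl y ∉ φ.allVars) (h : φ.freeFor e (Sum.inl x)) :
    (φ.replaceAll (Sum.inr a) (Sum.inl y)).freeFor (replaceWitness a y e) (Sum.inl x) := by
  induction φ with
  | atom => trivial
  | bot => trivial
  | imp φ ψ ihφ ihψ =>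
    simp only [allVars, Finset.mem_union, not_or] at hy
    exact ⟨ihφ hy.1 h.1, ihψ hy.2 h.2⟩
  | all z φ ih =>
    have hzy : z ≠ y := fun hz => hy (by simp [allVars, hz])
    rcases h with hfree | ⟨hez, hφ⟩
    · exact Or.inl ((inl_mem_fv_replaceAll_iff hy hx).not.2 hfree)
    · simp only [allVars, Finset.mem_insert, not_or] at hy
      exact Or.inr ⟨fun h => hez ((replaceWitness_eq_inl_iff hzy).1 h), ih hy.2 hφ⟩
  | box t X φ ih =>
    simp only [allVars, Finset.mem_union, not_or] at hy
    exact ⟨ih hy.2 h.1, fun he' =>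
      Finset.mem_image_of_mem _ (h.2 ((replaceWitness_mem_fv_replaceAll_iff hy.2 he).1 he'))⟩

theorem isAxiom_replaceAll_a1inst (L : Logic) {x : Nat} {e : Nat ⊕ V} {φ : Fml V}
    (h : φ.freeFor e (Sum.inl x))
    (hy : Sum.inl y ∉ ((all x φ).imp (φ.subst (Sum.inl x) e)).allVars) :
    IsAxiom L (((all x φ).imp (φ.subst (Sum.inl x) e)).replaceAll (Sum.inr a) (Sum.inl y)) := by
  simp only [allVars, Finset.mem_union, Finset.mem_insert, not_or, Sum.inl.injEq] at hy
  obtain ⟨⟨hyx, hyφ⟩, hysubst⟩ := hy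
  have hxy : x ≠ y := Ne.symm hyx
  show IsAxiom L ((all x (φ.replaceAll _ _)).imp ((φ.subst (Sum.inl x) e).replaceAll _ _))
  rw [replaceAll_subst hxy]
  by_cases he : e = Sum.inl y
  · -- `x` cannot be free in `φ`, or `y` would occur in the instance; any instance is then
    -- the same formula, and a fresh basic variable is free for `x`.
    have hxφ : Sum.inl x ∉ φ.fv := fun hx => hysubst (he ▸ mem_allVars_subst e hx)
    have hxφ' := (inl_mem_fv_replaceAll_iff (a := a) hyφ hxy).not.2 hxφ
    obtain ⟨z, hz⟩ := exists_inl_notMem_finset (φ.replaceAll (Sum.inr a) (Sum.inl y)).allVars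
    have hinst := IsAxiom.a1inst L x _ _ (freeFor_of_notMem_allVars (Sum.inl x) hz)
    rwa [subst_of_notMem_fv _ hxφ'] at hinst ⊢
  · exact IsAxiom.a1inst L x _ _ (freeFor_replaceAll hxy he hyφ h)

theorem isAxiom_replaceAll {L : Logic} {φ : Fml V} (h : IsAxiom L φ)
    (hy : Sum.inl y ∉ φ.allVars) : IsAxiom L (φ.replaceAll (Sum.inr a) (Sum.inl y)) := by
  cases h with
  | a1k => exact IsAxiom.a1k _ _ _
  | a1s => exact IsAxiom.a1s _ _ _ _
  | a1dne => exact IsAxiom.a1dne _ _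
  | a1inst L x e φ hfree => exact isAxiom_replaceAll_a1inst L hfree hy
  | a1allImp => exact IsAxiom.a1allImp _ _ _ _
  | a1vac L x φ hx =>
    simp only [allVars, Finset.mem_union, Finset.mem_insert, not_or, Sum.inl.injEq] at hy
    obtain ⟨hyφ, hyx, -⟩ := hy
    exact IsAxiom.a1vac L x _ ((inl_mem_fv_replaceAll_iff hyφ (Ne.symm hyx)).not.2 hx)
  | a2 L t X w φ hw =>
    simp only [allVars, Finset.mem_union, Finset.mem_insert, not_or] at hy
    obtain ⟨⟨⟨⟨hyw, -⟩, -⟩, hyφ⟩, -⟩ := hy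
    show IsAxiom L ((box t ((insert w X).image (replaceWitness a y)) _).imp _)
    rw [Finset.image_insert]
    exact IsAxiom.a2 L t _ _ _
      ((replaceWitness_mem_fv_replaceAll_iff hyφ (Ne.symm hyw)).not.2 hw)
  | a3 L t X w φ =>
    show IsAxiom L (Fml.imp _ (box t ((insert w X).image (replaceWitness a y)) _))
    rw [Finset.image_insert]
    exact IsAxiom.a3 L t _ _ _
  | b1 => exact IsAxiom.b1 _ _ _ _
  | b2 => exact IsAxiom.b2 _ _ _ _ _ _
  | b3l => exact IsAxiom.b3l _ _ _ _ _
  | b3r => exact IsAxiom.b3r _ _ _ _ _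
  | b4 => exact IsAxiom.b4 _ _ _ _
  | b5 L t X x φ hx =>
    have hxy : x ≠ y := fun h => hy (by simp [allVars, h])
    exact IsAxiom.b5 L t _ x _ ((inl_mem_image_replaceWitness_iff hxy X).not.2 hx)
  | bb t X w φ hw =>
    have hwy : w ≠ y := fun h => hy (by simp [allVars, h])
    show IsAxiom _ ((all w (box t ((insert (Sum.inl w) X).image (replaceWitness a y)) _)).imp _)
    rw [image_replaceWitness_insert_inl]
    exact IsAxiom.bb t _ w _ ((inl_mem_image_replaceWitness_iff hwy X).not.2 hw)
  | b6 => exact IsAxiom.b6 _ _ _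

end replaceWitness

end Fml

theorem inr_notMem_allVars_liftB (φ : FmlB) (a : Nat) : Sum.inr a ∉ (liftB φ).allVars := by
  induction φ with
  | atom => simp [liftB, Fml.vmap, Fml.allVars]
  | bot => simp [liftB, Fml.vmap, Fml.allVars]
  | imp φ ψ ihφ ihψ => simp_all [liftB, Fml.vmap, Fml.allVars]
  | all x φ ih => simp_all [liftB, Fml.vmap, Fml.allVars]
  | box t X φ ih => simp_all [liftB, Fml.vmap, Fml.allVars]

theorem inr_notMem_allVars_of_mem_CSV {CS : Set FmlB} {χ : FmlW} (hχ : χ ∈ CSV CS)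
    (a : Nat) : Sum.inr a ∉ χ.allVars := by
  obtain ⟨c, φ, ρ, -, hinj, hinr, hinl, rfl⟩ := hχ
  rw [hinj.eq_id_of_fixes_inr hinr hinl, Fml.renameFree_id]
  simpa [Fml.allVars, JTerm.gvars] using inr_notMem_allVars_liftB φ a

theorem IsProofSeq.map {L : Logic} {CS : Set FmlW} {seq : List FmlW} (f : FmlW → FmlW)
    (hseq : IsProofSeq L CS seq) (himp : ∀ φ ψ, f (φ.imp ψ) = (f φ).imp (f ψ))
    (hall : ∀ x φ, f (Fml.all x φ) = Fml.all x (f φ))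
    (hax : ∀ φ ∈ seq, IsAxiom L φ → IsAxiom L (f φ))
    (hcs : ∀ φ ∈ seq, φ ∈ CS → f φ ∈ CS) : IsProofSeq L CS (seq.map f) := by
  intro i hi
  have hi' : i < seq.length := by simpa using hi
  simp only [List.get_eq_getElem, List.getElem_map]
  have hmem : seq[i] ∈ seq := List.getElem_mem hi'
  rcases hseq i hi' with h | h | ⟨j, k, hj, hk, h⟩ | ⟨j, hj, x, h⟩
  · exact Or.inl (hax _ hmem h)
  · exact Or.inr (Or.inl (hcs _ hmem h))
  · simp only [List.get_eq_getElem] at h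
    exact Or.inr (Or.inr (Or.inl ⟨j, k, hj, hk, by rw [h, himp]⟩))
  · simp only [List.get_eq_getElem] at h
    exact Or.inr (Or.inr (Or.inr ⟨j, hj, x, by rw [h, hall]⟩))

theorem replace_witness_in_proof_general (CS : Set FmlB) (seq : List FmlW)
    (hp : IsProofSeq Logic.folpb (CSV CS) seq)
    (a y : Nat)
    (hy : ∀ φ ∈ seq, Sum.inl y ∉ φ.allVars) :
    IsProofSeq Logic.folpb (CSV CS)
      (seq.map (Fml.replaceAll (Sum.inr a) (Sum.inl y))) :=
  hp.map _ (fun _ _ => rfl) (fun _ _ => rfl)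
    (fun φ hφ hax => Fml.isAxiom_replaceAll hax (hy φ hφ))
    (fun χ _ hχ => by
      rwa [Fml.replaceAll_of_notMem_allVars _ (inr_notMem_allVars_of_mem_CSV hχ a)])

/-- If a FOLPb proof in the witness-variable language (using `CS(V)`) contains the
witness variable `a`, and `y` is a basic variable occurring nowhere in the proof,
then replacing `a` by `y` throughout yields again a proof. -/
theorem replace_witness_in_proof (CS : Set FmlB) (hCS : IsCS Logic.folpb CS)
    (hvc : VariantClosed CS) (seq : List FmlW)
    (hp : IsProofSeq Logic.folpb (CSV CS) seq)
    (a y : Nat)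
    (ha : ∃ φ ∈ seq, Sum.inr a ∈ φ.allVars)
    (hy : ∀ φ ∈ seq, Sum.inl y ∉ φ.allVars) :
    IsProofSeq Logic.folpb (CSV CS)
      (seq.map (Fml.replaceAll (Sum.inr a) (Sum.inl y))) :=
  replace_witness_in_proof_general CS seq hp a y hy
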